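/- Nonnegativity of the bound (Remark after the Corollary): Let B, C ⊆ V with B ≠ C, λ_B > 0, λ_C > 0, and suppose both P_B and P_C are symmetric. Then E[ J_B J_C ( (tanh(βλ_B J_B) − ⟨σ_B⟩_J) / tanh(2βλ_C J_C) + (tanh(βλ_C J_C) − ⟨σ_C⟩_J) / tanh(2βλ_B J_B) ) ] ≥ 0, where J_C / tanh(2βλ_C J_C) is interpreted by its continuous extension 1/(2βλ_C) at J_C = 0, and similarly for B. -/

import Mathlib

/-!
Fix every coupling except `J_B` and put `h = βλ_B J_B`. Since `σ_B = ±1`,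
`exp (h σ_B) = cosh h + σ_B sinh h`; so with `Z₀` and `S₀ = ∑ σ_B e^{…}` taken at `J_B = 0`,
`Z_J = cosh h Z₀ + sinh h S₀` and `tanh h - ⟨σ_B⟩_J = -S₀ / (cosh h Z_J)`. Hence the `B`-term
plus its image under `J_B ↦ -J_B` is `2 J_B sinh h S₀² / (cosh h Z_J Z_J')`, with `J'` the
flipped coupling, times the factor `J_C / tanh (2βλ_C J_C)`, which is nonnegative and unchanged
by the flip. The symmetry of `P_B` and `P_C` makes both flips measure preserving, and averaging
the integrand over the four sign changes of `(J_B, J_C)` gives a pointwise nonnegative function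
with the same integral.
-/

open MeasureTheory Real

variable {V : Type*}

/-- Spin value of a configuration at a site: `+1` or `-1`. -/
noncomputable def spin (σ : V → Bool) (i : V) : ℝ := if σ i then 1 else -1

/-- `σ_A = ∏_{i ∈ A} σ_i`. -/
noncomputable def sigmaA (A : Finset V) (σ : V → Bool) : ℝ := ∏ i ∈ A, spin σ i

/-- `β Σ_A λ_A J_A σ_A` (minus the Hamiltonian, times β). -/
noncomputable def energy [Fintype V] [DecidableEq V] (β : ℝ) (lam J : Finset V → ℝ)
    (σ : V → Bool) : ℝ := β * ∑ A : Finset V, lam A * J A * sigmaA A σ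

/-- Partition function `Z_J`. -/
noncomputable def Zfun [Fintype V] [DecidableEq V] (β : ℝ) (lam J : Finset V → ℝ) : ℝ :=
  ∑ σ : V → Bool, Real.exp (energy β lam J σ)

/-- Gibbs expectation `⟨σ_B⟩_J`. -/
noncomputable def corr [Fintype V] [DecidableEq V] (β : ℝ) (lam J : Finset V → ℝ)
    (B : Finset V) : ℝ :=
  (∑ σ : V → Bool, sigmaA B σ * Real.exp (energy β lam J σ)) / Zfun β lam J

/-- Gibbs expectation `⟨σ_B σ_C⟩_J`. -/
noncomputable def corr2 [Fintype V] [DecidableEq V] (β : ℝ) (lam J : Finset V → ℝ)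
    (B C : Finset V) : ℝ :=
  (∑ σ : V → Bool, sigmaA B σ * sigmaA C σ * Real.exp (energy β lam J σ)) / Zfun β lam J

/-- Negate the coupling indexed by `B`. -/
noncomputable def flipJ [DecidableEq V] (B : Finset V) (J : Finset V → ℝ) : Finset V → ℝ :=
  Function.update J B (-(J B))

/-- The density-ratio condition `P(-x) = exp(-2 b x) P(x)`: the pushforward of `P` under
negation equals the measure with density `x ↦ exp (-2 b x)` with respect to `P`. -/
def densityRatio (P : Measure ℝ) (b : ℝ) : Prop :=
  P.map (fun x => -x) = P.withDensity (fun x => ENNReal.ofReal (Real.exp (-2 * b * x)))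

/-- `x / sinh (a x)`, extended continuously by `1 / a` at `x = 0`. -/
noncomputable def qsinh (a x : ℝ) : ℝ :=
  if x = 0 then 1 / a else x / Real.sinh (a * x)

/-- `x / tanh (a x)`, extended continuously by `1 / a` at `x = 0`. -/
noncomputable def qtanh (a x : ℝ) : ℝ :=
  if x = 0 then 1 / a else x / Real.tanh (a * x)

section Symmetrization

variable {α : Type*} [MeasurableSpace α] {μ : Measure α}

theorem integral_add_comp_eq_two_mul {f : α → α} (hf : MeasurePreserving f μ μ)
    (hfe : MeasurableEmbedding f) {F : α → ℝ} (hF : Integrable F μ) :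
    ∫ x, (F x + F (f x)) ∂μ = 2 * ∫ x, F x ∂μ := by
  rw [integral_add hF (g := fun x => F (f x)) (hf.integrable_comp_of_integrable hF),
    hf.integral_comp hfe]
  ring

theorem integral_add_nonneg_of_commute_flips {f g : α → α}
    (hf : MeasurePreserving f μ μ) (hfe : MeasurableEmbedding f)
    (hg : MeasurePreserving g μ μ) (hge : MeasurableEmbedding g)
    (hfg : ∀ x, f (g x) = g (f x)) {u v : α → ℝ} (huv : Integrable (fun x => u x + v x) μ)
    (hu : ∀ x, 0 ≤ u x + u (f x)) (hv : ∀ x, 0 ≤ v x + v (g x)) :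
    0 ≤ ∫ x, (u x + v x) ∂μ := by
  set F := fun x => u x + v x
  have hFf : Integrable (fun x => F x + F (f x)) μ :=
    huv.add (hf.integrable_comp_of_integrable huv)
  have hfour : ∫ x, (F x + F (f x) + (F (g x) + F (f (g x)))) ∂μ = 4 * ∫ x, F x ∂μ := by
    rw [integral_add_comp_eq_two_mul hg hge hFf, integral_add_comp_eq_two_mul hf hfe huv]
    ring
  have hpos : 0 ≤ ∫ x, (F x + F (f x) + (F (g x) + F (f (g x)))) ∂μ := by
    refine integral_nonneg fun x => ?_
    have h₁ := hu x
    have h₂ := hu (g x)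
    have h₃ := hv x
    have h₄ := hv (f x)
    rw [hfg] at h₂
    simp only [Pi.zero_apply, F, hfg]
    linarith
  linarith

end Symmetrization

theorem mul_sinh_mul_nonneg {c : ℝ} (hc : 0 ≤ c) (x : ℝ) : 0 ≤ x * sinh (c * x) := by
  rcases le_total 0 x with hx | hx
  · exact mul_nonneg hx (sinh_nonneg_iff.mpr (mul_nonneg hc hx))
  · exact mul_nonneg_of_nonpos_of_nonpos hx
      (sinh_nonpos_iff.mpr (mul_nonpos_of_nonneg_of_nonpos hc hx))

theorem qtanh_nonneg {a : ℝ} (ha : 0 ≤ a) (x : ℝ) : 0 ≤ qtanh a x := by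
  unfold qtanh
  split_ifs
  · exact one_div_nonneg.mpr ha
  · have hxt : 0 ≤ x * tanh (a * x) := by
      rw [tanh_eq_sinh_div_cosh, ← mul_div_assoc]
      exact div_nonneg (mul_sinh_mul_nonneg ha x) (cosh_pos _).le
    exact div_nonneg_iff.mpr (mul_nonneg_iff.mp hxt)

theorem mul_tanh_sub_ratio_add_neg_nonneg {x h Z S : ℝ} (hx : 0 ≤ x * sinh h)
    (hp : 0 < cosh h * Z + sinh h * S) (hm : 0 < cosh (-h) * Z + sinh (-h) * S) :
    0 ≤ x * (tanh h - (cosh h * S + sinh h * Z) / (cosh h * Z + sinh h * S)) +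
      -x * (tanh (-h) - (cosh (-h) * S + sinh (-h) * Z) / (cosh (-h) * Z + sinh (-h) * S)) := by
  simp only [cosh_neg, sinh_neg, tanh_neg, neg_mul, ← sub_eq_add_neg] at hm ⊢
  have hc := cosh_pos h
  -- each bracket is `-S / (cosh h * D)`, `D` its denominator, because `cosh² - sinh² = 1`
  have key : x * (tanh h - (cosh h * S + sinh h * Z) / (cosh h * Z + sinh h * S)) -
      x * (-tanh h - (cosh h * S - sinh h * Z) / (cosh h * Z - sinh h * S)) =
      2 * (x * sinh h) * S ^ 2 /
        (cosh h * ((cosh h * Z + sinh h * S) * (cosh h * Z - sinh h * S))) := by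
    rw [tanh_eq_sinh_div_cosh]
    field_simp [hp.ne', hm.ne', hc.ne']
    linear_combination (2 * x * sinh h * S ^ 2) * cosh_sq_sub_sinh_sq h
  rw [key]
  positivity

theorem sigmaA_mul_self (B : Finset V) (σ : V → Bool) : sigmaA B σ * sigmaA B σ = 1 := by
  rw [sigmaA, ← Finset.prod_mul_distrib]
  refine Finset.prod_eq_one fun i _ => ?_
  unfold spin
  split_ifs <;> norm_num

theorem exp_mul_sigmaA (a : ℝ) (B : Finset V) (σ : V → Bool) :
    exp (a * sigmaA B σ) = cosh a + sinh a * sigmaA B σ := by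
  rcases mul_self_eq_one_iff.mp (sigmaA_mul_self B σ) with h | h <;> rw [h]
  · rw [mul_one, mul_one, cosh_add_sinh]
  · rw [mul_neg_one, mul_neg_one, ← sub_eq_add_neg, cosh_sub_sinh]

section Flip

variable [DecidableEq V]

theorem flipJ_apply_self (B : Finset V) (J : Finset V → ℝ) : flipJ B J B = -J B :=
  Function.update_self _ _ _

theorem flipJ_apply_of_ne {A B : Finset V} (h : A ≠ B) (J : Finset V → ℝ) :
    flipJ B J A = J A :=
  Function.update_of_ne h _ _

theorem update_flipJ (B : Finset V) (J : Finset V → ℝ) :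
    Function.update (flipJ B J) B 0 = Function.update J B 0 :=
  Function.update_idem _ _ _

theorem flipJ_comm {B C : Finset V} (hBC : B ≠ C) (J : Finset V → ℝ) :
    flipJ B (flipJ C J) = flipJ C (flipJ B J) := by
  unfold flipJ
  rw [Function.update_of_ne hBC, Function.update_of_ne hBC.symm, Function.update_comm hBC]

theorem flipJ_involutive (B : Finset V) : Function.Involutive (flipJ B) := by
  intro J
  rw [flipJ, flipJ_apply_self, neg_neg, flipJ, Function.update_idem, Function.update_eq_self]

theorem flipJ_eq_pi_map (B : Finset V) :
    flipJ B = fun J A => (if A = B then Neg.neg else id) (J A) := by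
  funext J A
  by_cases h : A = B
  · subst h; simp [flipJ_apply_self]
  · simp [flipJ_apply_of_ne h, h]

theorem measurable_flipJ (B : Finset V) : Measurable (flipJ B : (Finset V → ℝ) → _) := by
  rw [flipJ_eq_pi_map]
  refine measurable_pi_lambda _ fun A => ?_
  split_ifs
  exacts [(measurable_pi_apply A).neg, measurable_pi_apply A]

theorem measurableEmbedding_flipJ (B : Finset V) :
    MeasurableEmbedding (flipJ B : (Finset V → ℝ) → _) :=
  (MeasurableEquiv.ofInvolutive _ (flipJ_involutive B) (measurable_flipJ B)).measurableEmbedding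

theorem measurePreserving_flipJ [Fintype V] (P : Finset V → Measure ℝ)
    [∀ A, SigmaFinite (P A)] {B : Finset V} (hPB : (P B).map (fun x => -x) = P B) :
    MeasurePreserving (flipJ B) (Measure.pi P) (Measure.pi P) := by
  rw [flipJ_eq_pi_map]
  refine measurePreserving_pi P P fun A => ?_
  split_ifs with h
  · subst h; exact ⟨measurable_neg, hPB⟩
  · exact MeasurePreserving.id _

end Flip

section Gibbs

variable [Fintype V] [DecidableEq V]

noncomputable def corrNum (β : ℝ) (lam J : Finset V → ℝ) (B : Finset V) : ℝ :=
  ∑ σ : V → Bool, sigmaA B σ * exp (energy β lam J σ)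

theorem corr_eq_corrNum_div (β : ℝ) (lam J : Finset V → ℝ) (B : Finset V) :
    corr β lam J B = corrNum β lam J B / Zfun β lam J :=
  rfl

theorem Zfun_pos (β : ℝ) (lam J : Finset V → ℝ) : 0 < Zfun β lam J :=
  Finset.sum_pos (fun _ _ => exp_pos _) Finset.univ_nonempty

theorem energy_eq_add_energy_update_zero (β : ℝ) (lam J : Finset V → ℝ) (B : Finset V)
    (σ : V → Bool) :
    energy β lam J σ =
      β * lam B * J B * sigmaA B σ + energy β lam (Function.update J B 0) σ := by
  unfold energy
  rw [Fintype.sum_eq_add_sum_compl B, Fintype.sum_eq_add_sum_compl B,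
    Function.update_self, mul_zero, zero_mul, zero_add]
  have hrest : ∑ A ∈ {B}ᶜ, lam A * Function.update J B 0 A * sigmaA A σ =
      ∑ A ∈ {B}ᶜ, lam A * J A * sigmaA A σ :=
    Finset.sum_congr rfl fun A hA => by
      rw [Function.update_of_ne (by simpa using hA)]
  rw [hrest]
  ring

theorem exp_energy_eq (β : ℝ) (lam J : Finset V → ℝ) (B : Finset V) (σ : V → Bool) :
    exp (energy β lam J σ) =
      (cosh (β * lam B * J B) + sinh (β * lam B * J B) * sigmaA B σ) *
        exp (energy β lam (Function.update J B 0) σ) := by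
  rw [energy_eq_add_energy_update_zero β lam J B, exp_add, exp_mul_sigmaA]

theorem Zfun_eq_cosh_add_sinh (β : ℝ) (lam J : Finset V → ℝ) (B : Finset V) :
    Zfun β lam J =
      cosh (β * lam B * J B) * Zfun β lam (Function.update J B 0) +
        sinh (β * lam B * J B) * corrNum β lam (Function.update J B 0) B := by
  simp only [Zfun, corrNum, Finset.mul_sum, ← Finset.sum_add_distrib]
  refine Finset.sum_congr rfl fun σ _ => ?_
  rw [exp_energy_eq β lam J B]
  ring

theorem corrNum_eq_cosh_add_sinh (β : ℝ) (lam J : Finset V → ℝ) (B : Finset V) :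
    corrNum β lam J B =
      cosh (β * lam B * J B) * corrNum β lam (Function.update J B 0) B +
        sinh (β * lam B * J B) * Zfun β lam (Function.update J B 0) := by
  simp only [Zfun, corrNum, Finset.mul_sum, ← Finset.sum_add_distrib]
  refine Finset.sum_congr rfl fun σ _ => ?_
  rw [exp_energy_eq β lam J B]
  linear_combination sinh (β * lam B * J B) *
    exp (energy β lam (Function.update J B 0) σ) * sigmaA_mul_self B σ

theorem corr_eq_cosh_sinh_div (β : ℝ) (lam J : Finset V → ℝ) (B : Finset V) :
    corr β lam J B =
      (cosh (β * lam B * J B) * corrNum β lam (Function.update J B 0) B +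
          sinh (β * lam B * J B) * Zfun β lam (Function.update J B 0)) /
        (cosh (β * lam B * J B) * Zfun β lam (Function.update J B 0) +
          sinh (β * lam B * J B) * corrNum β lam (Function.update J B 0) B) := by
  rw [corr_eq_corrNum_div, corrNum_eq_cosh_add_sinh β lam J B, Zfun_eq_cosh_add_sinh β lam J B]

theorem mul_tanh_sub_corr_add_flipJ_nonneg {β : ℝ} {lam : Finset V → ℝ} {B : Finset V}
    (hβlam : 0 ≤ β * lam B) (J : Finset V → ℝ) :
    0 ≤ J B * (tanh (β * lam B * J B) - corr β lam J B) +
      flipJ B J B * (tanh (β * lam B * flipJ B J B) - corr β lam (flipJ B J) B) := by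
  have hZ := Zfun_pos β lam J
  have hZ' := Zfun_pos β lam (flipJ B J)
  rw [Zfun_eq_cosh_add_sinh (B := B)] at hZ hZ'
  rw [corr_eq_cosh_sinh_div, corr_eq_cosh_sinh_div]
  rw [update_flipJ, flipJ_apply_self, mul_neg] at hZ' ⊢
  exact mul_tanh_sub_ratio_add_neg_nonneg (mul_sinh_mul_nonneg hβlam _) hZ hZ'

theorem mul_qtanh_add_flipJ_nonneg {β : ℝ} {lam : Finset V → ℝ} {a : ℝ} {B C : Finset V}
    (hβlam : 0 ≤ β * lam B) (ha : 0 ≤ a) (hBC : B ≠ C) (J : Finset V → ℝ) :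
    0 ≤ J B * (tanh (β * lam B * J B) - corr β lam J B) * qtanh a (J C) +
      flipJ B J B * (tanh (β * lam B * flipJ B J B) - corr β lam (flipJ B J) B) *
        qtanh a (flipJ B J C) := by
  rw [flipJ_apply_of_ne hBC.symm, ← add_mul]
  exact mul_nonneg (mul_tanh_sub_corr_add_flipJ_nonneg hβlam J) (qtanh_nonneg ha _)

end Gibbs

/-- Nonnegativity of the bound (Remark after the Corollary). -/
theorem bound_nonneg [Fintype V] [DecidableEq V]
    (β : ℝ) (hβ : 0 < β) (lam : Finset V → ℝ)
    (P : Finset V → Measure ℝ) [∀ A, IsProbabilityMeasure (P A)]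
    (B C : Finset V) (hBC : B ≠ C) (hlamB : 0 < lam B) (hlamC : 0 < lam C)
    (hPB : (P B).map (fun x => -x) = P B)
    (hPC : (P C).map (fun x => -x) = P C)
    (hint : Integrable (fun J =>
      J B * (Real.tanh (β * lam B * J B) - corr β lam J B) * qtanh (2 * β * lam C) (J C) +
      J C * (Real.tanh (β * lam C * J C) - corr β lam J C) * qtanh (2 * β * lam B) (J B))
      (Measure.pi P)) :
    0 ≤ ∫ J, (J B * (Real.tanh (β * lam B * J B) - corr β lam J B) *
          qtanh (2 * β * lam C) (J C) +
        J C * (Real.tanh (β * lam C * J C) - corr β lam J C) *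
          qtanh (2 * β * lam B) (J B)) ∂(Measure.pi P) :=
  integral_add_nonneg_of_commute_flips
    (measurePreserving_flipJ P hPB) (measurableEmbedding_flipJ B)
    (measurePreserving_flipJ P hPC) (measurableEmbedding_flipJ C) (flipJ_comm hBC) hint
    (mul_qtanh_add_flipJ_nonneg (by positivity) (by positivity) hBC)
    (mul_qtanh_add_flipJ_nonneg (by positivity) (by positivity) hBC.symm)
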